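/- Let h be a simple piecewise linear convex function on the triangle Δ = {(x,y) : x ≥ 0, y ≥ 0, x/a + y/b ≤ 1} (with a, b > 0) of the form h(x,y) = max(λ(x,y)+c, 0) for an affine function λ, satisfying h(a,0) = h(0,b) = 0. Then there is a constant C, independent of a and b, such that (∫_Δ h² dμ)^{1/2} ≤ C (∫₀^a h(x,0) dx + ∫₀^b h(0,y) dy). -/
import Mathlib


open MeasureTheory Set

set_option maxHeartbeats 1600000 in
/-- For a simple piecewise linear convex function
`h = max (λ + c) 0` on the triangle with vertices `(0,0), (a,0), (0,b)`
vanishing at `(a,0)` and `(0,b)`, the `L²` norm of `h` on the triangle is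
bounded by `C` times the sum of the integrals of `h` along the two legs,
with `C` independent of `a` and `b`. -/
theorem stmt_0 :
    ∃ C : ℝ, 0 < C ∧ ∀ (a b : ℝ), 0 < a → 0 < b →
      ∀ (lam : (ℝ × ℝ) →ₗ[ℝ] ℝ) (c : ℝ),
        max (lam (a, 0) + c) 0 = 0 →
        max (lam (0, b) + c) 0 = 0 →
        Real.sqrt (∫ p in {p : ℝ × ℝ | 0 ≤ p.1 ∧ 0 ≤ p.2 ∧ p.1 / a + p.2 / b ≤ 1},
            (max (lam p + c) 0) ^ 2) ≤
          C * ((∫ x in Icc (0:ℝ) a, max (lam (x, 0) + c) 0) +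
               ∫ y in Icc (0:ℝ) b, max (lam (0, y) + c) 0) := by
  refine ⟨1, one_pos, ?_⟩
  intro a b ha hb lam c hA hB
  set p : ℝ := lam (1, 0) with hp
  set q : ℝ := lam (0, 1) with hq
  have hlam : ∀ x y : ℝ, lam (x, y) = p * x + q * y := by
    intro x y
    have hxy : (x, y) = x • ((1:ℝ), (0:ℝ)) + y • ((0:ℝ), (1:ℝ)) := by
      simp [Prod.ext_iff]
    rw [hxy, map_add, LinearMap.map_smul, LinearMap.map_smul, smul_eq_mul, smul_eq_mul]
    ring
  have hlam' : ∀ z : ℝ × ℝ, lam z = p * z.1 + q * z.2 := by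
    intro z; rw [← hlam z.1 z.2]
  have hpa : p * a + c ≤ 0 := by
    have h := le_max_left (lam (a, 0) + c) 0
    rw [hA] at h
    have : lam (a, 0) = p * a := by rw [hlam]; ring
    linarith [this ▸ h]
  have hqb : q * b + c ≤ 0 := by
    have h := le_max_left (lam (0, b) + c) 0
    rw [hB] at h
    have : lam (0, b) = q * b := by rw [hlam]; ring
    linarith [this ▸ h]
  set Δ : Set (ℝ × ℝ) := {z : ℝ × ℝ | 0 ≤ z.1 ∧ 0 ≤ z.2 ∧ z.1 / a + z.2 / b ≤ 1} with hΔ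
  have hΔmeas : MeasurableSet Δ := by
    apply MeasurableSet.inter
    · exact measurableSet_le measurable_const measurable_fst
    apply MeasurableSet.inter
    · exact measurableSet_le measurable_const measurable_snd
    · exact measurableSet_le ((measurable_fst.div_const a).add
        (measurable_snd.div_const b)) measurable_const
  rcases le_or_gt c 0 with hc | hc
  · -- degenerate case: h vanishes everywhere relevant
    have hΔ0 : ∀ z ∈ Δ, (max (lam z + c) 0) ^ 2 = (0:ℝ) := by
      intro z hz
      obtain ⟨hx, hy, hxy⟩ := hz
      have hxy' : z.1 * b + z.2 * a ≤ a * b := by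
        rw [div_add_div _ _ (ne_of_gt ha) (ne_of_gt hb),
          div_le_one (by positivity)] at hxy
        linarith
      have h1 : z.1 * (p * a + c) ≤ 0 := mul_nonpos_of_nonneg_of_nonpos hx hpa
      have h2 : z.2 * (q * b + c) ≤ 0 := mul_nonpos_of_nonneg_of_nonpos hy hqb
      have h3 : c * (a * b - (z.1 * b + z.2 * a)) ≤ 0 :=
        mul_nonpos_of_nonpos_of_nonneg hc (by linarith)
      have h4 : (p * z.1 + q * z.2 + c) * (a * b) ≤ 0 := by
        nlinarith [mul_nonpos_of_nonneg_of_nonpos hb.le h1,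
          mul_nonpos_of_nonneg_of_nonpos ha.le h2, h3]
      have hle : lam z + c ≤ 0 := by
        rw [hlam']
        nlinarith [h4, mul_pos ha hb]
      rw [max_eq_right hle]
      ring
    have hL1 : ∀ x ∈ Icc (0:ℝ) a, max (lam (x, 0) + c) 0 = (0:ℝ) := by
      intro x hx
      have h1 : x * (p * a + c) ≤ 0 := mul_nonpos_of_nonneg_of_nonpos hx.1 hpa
      have h3 : c * (a - x) ≤ 0 := mul_nonpos_of_nonpos_of_nonneg hc (by linarith [hx.2])
      apply max_eq_right
      have : lam (x, 0) = p * x := by rw [hlam]; ring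
      rw [this]
      nlinarith [h1, h3, ha]
    have hL2 : ∀ y ∈ Icc (0:ℝ) b, max (lam (0, y) + c) 0 = (0:ℝ) := by
      intro y hy
      have h1 : y * (q * b + c) ≤ 0 := mul_nonpos_of_nonneg_of_nonpos hy.1 hqb
      have h3 : c * (b - y) ≤ 0 := mul_nonpos_of_nonpos_of_nonneg hc (by linarith [hy.2])
      apply max_eq_right
      have : lam (0, y) = q * y := by rw [hlam]; ring
      rw [this]
      nlinarith [h1, h3, hb]
    rw [setIntegral_congr_fun hΔmeas hΔ0, setIntegral_congr_fun measurableSet_Icc hL1,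
      setIntegral_congr_fun measurableSet_Icc hL2]
    simp
  · -- main case c > 0
    have hp0 : p < 0 := by nlinarith
    have hq0 : q < 0 := by nlinarith
    set g₁ : ℝ → ℝ := fun x => max (p * x + c) 0 with hg₁
    set g₂ : ℝ → ℝ := fun y => max (q * y + c) 0 with hg₂
    have contg₁ : Continuous g₁ := by fun_prop
    have contg₂ : Continuous g₂ := by fun_prop
    -- rewrite leg integrands
    have e₁ : (fun x => max (lam (x, 0) + c) 0) = g₁ := by
      funext x
      have : lam (x, 0) = p * x := by rw [hlam]; ring
      rw [this]
    have e₂ : (fun y => max (lam (0, y) + c) 0) = g₂ := by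
      funext y
      have : lam (0, y) = q * y := by rw [hlam]; ring
      rw [this]
    rw [show (∫ x in Icc (0:ℝ) a, max (lam (x, 0) + c) 0) = ∫ x in Icc (0:ℝ) a, g₁ x from by rw [e₁],
      show (∫ y in Icc (0:ℝ) b, max (lam (0, y) + c) 0) = ∫ y in Icc (0:ℝ) b, g₂ y from by rw [e₂]]
    set I₁ : ℝ := ∫ x in Icc (0:ℝ) a, g₁ x with hI₁
    set I₂ : ℝ := ∫ y in Icc (0:ℝ) b, g₂ y with hI₂
    have hI₁0 : 0 ≤ I₁ :=
      setIntegral_nonneg measurableSet_Icc fun x _ => le_max_right _ _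
    have hI₂0 : 0 ≤ I₂ :=
      setIntegral_nonneg measurableSet_Icc fun y _ => le_max_right _ _
    set F₁ : ℝ → ℝ := fun x => g₁ x ^ 2 / c with hF₁
    set F₂ : ℝ → ℝ := fun y => g₂ y ^ 2 / c with hF₂
    have contF₁ : Continuous F₁ := by fun_prop
    have contF₂ : Continuous F₂ := by fun_prop
    set R : Set (ℝ × ℝ) := Icc (0:ℝ) a ×ˢ Icc (0:ℝ) b with hR
    have hΔsub : Δ ⊆ R := by
      rintro z ⟨hx, hy, hxy⟩
      have hxb : 0 ≤ z.2 / b := by positivity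
      have hya : 0 ≤ z.1 / a := by positivity
      constructor
      · exact ⟨hx, by rw [← div_le_one ha] at *; linarith⟩
      · exact ⟨hy, by rw [← div_le_one hb] at *; linarith⟩
    have intR : IntegrableOn (fun z : ℝ × ℝ => F₁ z.1 * F₂ z.2) R := by
      rw [hR]
      have hcont : Continuous fun z : ℝ × ℝ => F₁ z.1 * F₂ z.2 := by fun_prop
      exact hcont.continuousOn.integrableOn_compact (isCompact_Icc.prod isCompact_Icc)
    have intΔrhs : IntegrableOn (fun z : ℝ × ℝ => F₁ z.1 * F₂ z.2) Δ :=
      intR.mono_set hΔsub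
    have intΔlhs : IntegrableOn (fun z : ℝ × ℝ => (max (lam z + c) 0) ^ 2) Δ := by
      refine IntegrableOn.mono_set ?_ hΔsub
      have hlc : Continuous fun z : ℝ × ℝ => lam z := lam.continuous_of_finiteDimensional
      have hcont : Continuous fun z : ℝ × ℝ => (max (lam z + c) 0) ^ 2 := by fun_prop
      rw [hR]
      exact hcont.continuousOn.integrableOn_compact (isCompact_Icc.prod isCompact_Icc)
    -- pointwise bound on Δ
    have key : ∀ z ∈ Δ, (max (lam z + c) 0) ^ 2 ≤ F₁ z.1 * F₂ z.2 := by
      rintro z ⟨hx, hy, -⟩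
      have hpx : p * z.1 ≤ 0 := mul_nonpos_of_nonpos_of_nonneg hp0.le hx
      have hqy : q * z.2 ≤ 0 := mul_nonpos_of_nonpos_of_nonneg hq0.le hy
      have hg₁0 : 0 ≤ g₁ z.1 := le_max_right _ _
      have hg₂0 : 0 ≤ g₂ z.2 := le_max_right _ _
      have hle : max (p * z.1 + q * z.2 + c) 0 ≤ g₁ z.1 * g₂ z.2 / c := by
        have hRnn : 0 ≤ g₁ z.1 * g₂ z.2 / c :=
          div_nonneg (mul_nonneg hg₁0 hg₂0) hc.le
        rcases le_or_gt (p * z.1 + c) 0 with h1 | h1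
        · rw [max_eq_right (by linarith)]; exact hRnn
        rcases le_or_gt (q * z.2 + c) 0 with h2 | h2
        · rw [max_eq_right (by linarith)]; exact hRnn
        · have eg1 : g₁ z.1 = p * z.1 + c := max_eq_left h1.le
          have eg2 : g₂ z.2 = q * z.2 + c := max_eq_left h2.le
          refine max_le ?_ hRnn
          rw [eg1, eg2, le_div_iff₀ hc]
          nlinarith [mul_nonneg (neg_nonneg.mpr hpx) (neg_nonneg.mpr hqy)]
      have hsq : (max (lam z + c) 0) ^ 2 ≤ (g₁ z.1 * g₂ z.2 / c) ^ 2 := by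
        rw [hlam']
        exact pow_le_pow_left₀ (le_max_right _ _) hle 2
      calc (max (lam z + c) 0) ^ 2 ≤ (g₁ z.1 * g₂ z.2 / c) ^ 2 := hsq
        _ = F₁ z.1 * F₂ z.2 := by
          show _ = g₁ z.1 ^ 2 / c * (g₂ z.2 ^ 2 / c)
          rw [div_pow, mul_pow, pow_two c, div_mul_div_comm]
    have step1 : (∫ z in Δ, (max (lam z + c) 0) ^ 2) ≤ ∫ z in Δ, F₁ z.1 * F₂ z.2 :=
      setIntegral_mono_on intΔlhs intΔrhs hΔmeas key
    have step2 : (∫ z in Δ, F₁ z.1 * F₂ z.2) ≤ ∫ z in R, F₁ z.1 * F₂ z.2 := by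
      apply setIntegral_mono_set intR
      · filter_upwards with z
        have : 0 ≤ F₁ z.1 := div_nonneg (sq_nonneg _) hc.le
        have : 0 ≤ F₂ z.2 := div_nonneg (sq_nonneg _) hc.le
        positivity
      · exact HasSubset.Subset.eventuallyLE hΔsub
    have step3 : (∫ z in R, F₁ z.1 * F₂ z.2) =
        (∫ x in Icc (0:ℝ) a, F₁ x) * ∫ y in Icc (0:ℝ) b, F₂ y := by
      rw [hR, ← setIntegral_prod_mul F₁ F₂ (Icc (0:ℝ) a) (Icc (0:ℝ) b)]
      rfl
    have bound₁ : (∫ x in Icc (0:ℝ) a, F₁ x) ≤ I₁ := by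
      apply setIntegral_mono_on (contF₁.integrableOn_Icc) (contg₁.integrableOn_Icc)
        measurableSet_Icc
      intro x hx
      have hpx : p * x ≤ 0 := mul_nonpos_of_nonpos_of_nonneg hp0.le hx.1
      have hg0 : 0 ≤ g₁ x := le_max_right _ _
      have hgc : g₁ x ≤ c := max_le (by linarith) hc.le
      rw [hF₁, div_le_iff₀ hc]
      nlinarith
    have bound₂ : (∫ y in Icc (0:ℝ) b, F₂ y) ≤ I₂ := by
      apply setIntegral_mono_on (contF₂.integrableOn_Icc) (contg₂.integrableOn_Icc)
        measurableSet_Icc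
      intro y hy
      have hqy : q * y ≤ 0 := mul_nonpos_of_nonpos_of_nonneg hq0.le hy.1
      have hg0 : 0 ≤ g₂ y := le_max_right _ _
      have hgc : g₂ y ≤ c := max_le (by linarith) hc.le
      rw [hF₂, div_le_iff₀ hc]
      nlinarith
    have hJ₁0 : 0 ≤ ∫ x in Icc (0:ℝ) a, F₁ x :=
      setIntegral_nonneg measurableSet_Icc fun x _ => div_nonneg (sq_nonneg _) hc.le
    have hJ₂0 : 0 ≤ ∫ y in Icc (0:ℝ) b, F₂ y :=
      setIntegral_nonneg measurableSet_Icc fun y _ => div_nonneg (sq_nonneg _) hc.le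
    have hfinal : (∫ z in Δ, (max (lam z + c) 0) ^ 2) ≤ I₁ * I₂ := by
      calc (∫ z in Δ, (max (lam z + c) 0) ^ 2)
          ≤ ∫ z in R, F₁ z.1 * F₂ z.2 := le_trans step1 step2
        _ = (∫ x in Icc (0:ℝ) a, F₁ x) * ∫ y in Icc (0:ℝ) b, F₂ y := step3
        _ ≤ I₁ * I₂ := mul_le_mul bound₁ bound₂ hJ₂0 hI₁0
    calc Real.sqrt (∫ z in Δ, (max (lam z + c) 0) ^ 2)
        ≤ Real.sqrt ((I₁ + I₂) ^ 2) := by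
          apply Real.sqrt_le_sqrt
          nlinarith
      _ = I₁ + I₂ := Real.sqrt_sq (by linarith)
      _ = 1 * (I₁ + I₂) := (one_mul _).symm
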